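/- Let ψ₁, ψ₂ ∈ ℝ⁴ be linearly independent real unit vectors and set r_{ij} = ψᵢᵀ J ψ_j. If r₁₁ r₂₂ > 0 and r₁₁r₂₂ − r₁₂² < 0, then for every p ∈ [0,1] the mixture ρ = p ψ₁ψ₁ᵀ + (1−p) ψ₂ψ₂ᵀ is optimally entangled: C(ρ) = p C(ψ₁ψ₁ᵀ) + (1−p) C(ψ₂ψ₂ᵀ) = p|r₁₁| + (1−p)|r₂₂|. -/

import Mathlib

open Matrix Polynomial

noncomputable section

/-- `J = σ_y ⊗ σ_y` as a complex 4×4 matrix (standard product basis). -/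
def Jc : Matrix (Fin 4) (Fin 4) ℂ :=
  !![0, 0, 0, -1; 0, 0, 1, 0; 0, 1, 0, 0; -1, 0, 0, 0]

/-- `J = σ_y ⊗ σ_y` as a real 4×4 matrix (standard product basis). -/
def Jr : Matrix (Fin 4) (Fin 4) ℝ :=
  !![0, 0, 0, -1; 0, 0, 1, 0; 0, 1, 0, 0; -1, 0, 0, 0]

/-- The spin-flipped matrix `ρ̃ = J ρ̄ J`. -/
def spinFlip (ρ : Matrix (Fin 4) (Fin 4) ℂ) : Matrix (Fin 4) (Fin 4) ℂ :=
  Jc * ρ.map (starRingEnd ℂ) * Jc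

/-- The concurrence of a two-qubit density matrix `ρ`:
`max (0, √μ₁ − √μ₂ − √μ₃ − √μ₄)` where `μ₁ ≥ μ₂ ≥ μ₃ ≥ μ₄` are the (real,
nonnegative) eigenvalues of `ρ ρ̃` listed with multiplicity. -/
def concurrence (ρ : Matrix (Fin 4) (Fin 4) ℂ) : ℝ :=
  let l : List ℝ :=
    (((ρ * spinFlip ρ).charpoly.roots.map Complex.re).sort (· ≤ ·))
  max 0 (Real.sqrt (l.getD 3 0) - Real.sqrt (l.getD 2 0) -
    Real.sqrt (l.getD 1 0) - Real.sqrt (l.getD 0 0))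

/-- The (complex) density matrix of the pure state given by a real 4-vector `ψ`,
namely `ψ ψᵀ`. -/
def pureState (ψ : Fin 4 → ℝ) : Matrix (Fin 4) (Fin 4) ℂ :=
  (Matrix.vecMulVec ψ ψ).map Complex.ofReal

end

/-!
Write the real mixture as `M = Ψᵀ D Ψ`, with `Ψ` the 2×4 matrix of rows `ψ₁, ψ₂` and
`D = diag(w₁, w₂)`. Then `ρ ρ̃ = (M J)²`, and moving `Ψᵀ` to the other side shows that its
spectrum is `{0, 0, a², b²}`, where `a, b` are the eigenvalues of the 2×2 matrix `G = D Ψ J Ψᵀ`.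
Since `det G = w₁ w₂ (r₁₁ r₂₂ − r₁₂²) ≤ 0`, the eigenvalues `a, b` are real of opposite signs, so
`C(ρ) = ||a| − |b|| = |a + b| = |tr G| = |w₁ r₁₁ + w₂ r₂₂|`. When `r₁₁, r₂₂` have the same sign
and the weights are nonnegative, this is `w₁ |r₁₁| + w₂ |r₂₂|`.
-/

namespace Matrix

variable {R : Type*} [CommRing R]

lemma charpoly_mul_self_fin_two [Nontrivial R] (G : Matrix (Fin 2) (Fin 2) R) {a b : R}
    (hsum : a + b = G.trace) (hprod : a * b = G.det) :
    (G * G).charpoly = (X - C (a ^ 2)) * (X - C (b ^ 2)) := by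
  have htrace : (G * G).trace = a ^ 2 + b ^ 2 := by
    rw [show a ^ 2 + b ^ 2 = (a + b) ^ 2 - 2 * (a * b) by ring, hsum, hprod, trace_fin_two,
      trace_fin_two, det_fin_two]
    simp only [mul_apply, Fin.sum_univ_two]
    ring
  rw [charpoly_fin_two, htrace, det_mul, ← hprod]
  simp only [map_add, map_mul, map_pow]
  ring

lemma charpoly_mul_self_mul_comm {m n : Type*} [Fintype m] [DecidableEq m] [Fintype n]
    [DecidableEq n] (A : Matrix m n R) (B : Matrix n m R)
    (hle : Fintype.card n ≤ Fintype.card m) :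
    (A * B * (A * B)).charpoly =
      X ^ (Fintype.card m - Fintype.card n) * (B * A * (B * A)).charpoly := by
  rw [show A * B * (A * B) = A * (B * A * B) by simp only [Matrix.mul_assoc],
    charpoly_mul_comm_of_le _ _ hle, Matrix.mul_assoc]

end Matrix

lemma exists_add_eq_and_mul_eq_of_nonpos (t : ℝ) {d : ℝ} (hd : d ≤ 0) :
    ∃ a b : ℝ, a + b = t ∧ a * b = d := by
  have hdisc : 0 ≤ t ^ 2 - 4 * d := by nlinarith [sq_nonneg t]
  refine ⟨(t + √(t ^ 2 - 4 * d)) / 2, (t - √(t ^ 2 - 4 * d)) / 2, by ring, ?_⟩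
  nlinarith [Real.sq_sqrt hdisc]

lemma abs_abs_sub_abs_of_mul_nonpos {a b : ℝ} (h : a * b ≤ 0) : |(|a| - |b|)| = |a + b| := by
  rw [← sq_eq_sq₀ (abs_nonneg _) (abs_nonneg _), sq_abs, sq_abs, sub_sq, add_sq, sq_abs, sq_abs,
    mul_assoc, ← abs_mul, abs_of_nonpos h]
  ring

lemma Multiset.sort_zero_zero_of_le {x y : ℝ} (hx : 0 ≤ x) (hxy : x ≤ y) :
    Multiset.sort ({0, 0, x, y} : Multiset ℝ) = [0, 0, x, y] :=
  List.mergeSort_eq_self _ (by simp [hx, hxy, hx.trans hxy])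

lemma concurrence_eq_of_roots (ρ : Matrix (Fin 4) (Fin 4) ℂ) {x y : ℝ} (hx : 0 ≤ x) (hy : 0 ≤ y)
    (h : (ρ * spinFlip ρ).charpoly.roots.map Complex.re = {0, 0, x, y}) :
    concurrence ρ = |√x - √y| := by
  wlog hxy : x ≤ y generalizing x y
  · rw [abs_sub_comm]
    refine this hy hx ?_ (le_of_not_ge hxy)
    rw [h, Multiset.insert_eq_cons 0, Multiset.insert_eq_cons 0, Multiset.pair_comm]
    rfl
  rw [concurrence, h, Multiset.sort_zero_zero_of_le hx hxy, abs_sub_comm,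
    abs_of_nonneg (sub_nonneg.2 (Real.sqrt_le_sqrt hxy))]
  simp [Real.sqrt_le_sqrt hxy]

lemma Jc_eq_map_Jr : Jc = Jr.map Complex.ofRealHom := by
  ext i j
  fin_cases i <;> fin_cases j <;> simp [Jc, Jr]

lemma Jr_transpose : Jrᵀ = Jr := by
  ext i j
  fin_cases i <;> fin_cases j <;> rfl

lemma dotProduct_Jr_mulVec_comm (x y : Fin 4 → ℝ) : y ⬝ᵥ (Jr *ᵥ x) = x ⬝ᵥ (Jr *ᵥ y) := by
  rw [dotProduct_mulVec, ← mulVec_transpose, Jr_transpose, dotProduct_comm]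

lemma mul_Jr_mul_transpose_apply {n : Type*} (Ψ : Matrix n (Fin 4) ℝ) (i j : n) :
    (Ψ * Jr * Ψᵀ) i j = Ψ i ⬝ᵥ (Jr *ᵥ Ψ j) := by
  rw [mul_apply, dotProduct_mulVec, dotProduct]
  rfl

lemma mul_spinFlip_map_ofReal (M : Matrix (Fin 4) (Fin 4) ℝ) :
    M.map Complex.ofRealHom * spinFlip (M.map Complex.ofRealHom) =
      (M * Jr * M * Jr).map Complex.ofRealHom := by
  have hconj : (M.map Complex.ofRealHom).map (starRingEnd ℂ) = M.map Complex.ofRealHom := by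
    ext i j
    simp
  rw [spinFlip, hconj, Jc_eq_map_Jr]
  simp only [Matrix.map_mul, Matrix.mul_assoc]

lemma concurrence_map_ofReal_of_charpoly (M : Matrix (Fin 4) (Fin 4) ℝ) (a b : ℝ)
    (h : (M * Jr * M * Jr).charpoly = X ^ 2 * ((X - C (a ^ 2)) * (X - C (b ^ 2)))) :
    concurrence (M.map Complex.ofRealHom) = |(|a| - |b|)| := by
  have hroots : (M.map Complex.ofRealHom * spinFlip (M.map Complex.ofRealHom)).charpoly.roots =
      {0, 0, ((a ^ 2 : ℝ) : ℂ), ((b ^ 2 : ℝ) : ℂ)} := by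
    rw [mul_spinFlip_map_ofReal, charpoly_map, h,
      ← roots_multiset_prod_X_sub_C ({0, 0, ((a ^ 2 : ℝ) : ℂ), ((b ^ 2 : ℝ) : ℂ)} : Multiset ℂ)]
    simp [pow_two, mul_assoc]
  rw [concurrence_eq_of_roots _ (sq_nonneg a) (sq_nonneg b), Real.sqrt_sq_eq_abs,
    Real.sqrt_sq_eq_abs]
  simp only [hroots, Multiset.insert_eq_cons, Multiset.map_cons, Multiset.map_singleton,
    Complex.zero_re, Complex.ofReal_re]

lemma sum_smul_pureState {n : Type*} [Fintype n] [DecidableEq n] (Ψ : Matrix n (Fin 4) ℝ)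
    (w : n → ℝ) :
    ∑ k, w k • pureState (Ψ k) = (Ψᵀ * diagonal w * Ψ).map Complex.ofRealHom := by
  ext i j
  simp only [pureState, Matrix.sum_apply, Matrix.smul_apply, map_apply, vecMulVec_apply,
    mul_apply, diagonal_apply, transpose_apply, mul_ite, mul_zero, Finset.sum_ite_eq',
    Finset.mem_univ, if_true, Complex.ofRealHom_eq_coe, Complex.ofReal_sum, Complex.ofReal_mul,
    Complex.real_smul]
  exact Finset.sum_congr rfl fun _ _ => by ring

lemma concurrence_smul_pureState_add_smul_pureState (ψ₁ ψ₂ : Fin 4 → ℝ) {w₁ w₂ : ℝ}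
    (h : w₁ * w₂ * ((ψ₁ ⬝ᵥ (Jr *ᵥ ψ₁)) * (ψ₂ ⬝ᵥ (Jr *ᵥ ψ₂)) - (ψ₁ ⬝ᵥ (Jr *ᵥ ψ₂)) ^ 2) ≤ 0) :
    concurrence (w₁ • pureState ψ₁ + w₂ • pureState ψ₂) =
      |w₁ * (ψ₁ ⬝ᵥ (Jr *ᵥ ψ₁)) + w₂ * (ψ₂ ⬝ᵥ (Jr *ᵥ ψ₂))| := by
  set Ψ : Matrix (Fin 2) (Fin 4) ℝ := of ![ψ₁, ψ₂]
  set D := diagonal ![w₁, w₂]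
  set M := Ψᵀ * D * Ψ
  set G : Matrix (Fin 2) (Fin 2) ℝ := D * (Ψ * Jr * Ψᵀ)
  have hmix : w₁ • pureState ψ₁ + w₂ • pureState ψ₂ = M.map Complex.ofRealHom := by
    rw [← sum_smul_pureState, Fin.sum_univ_two]
    rfl
  have hgram : Ψ * Jr * Ψᵀ =
      !![ψ₁ ⬝ᵥ (Jr *ᵥ ψ₁), ψ₁ ⬝ᵥ (Jr *ᵥ ψ₂); ψ₁ ⬝ᵥ (Jr *ᵥ ψ₂), ψ₂ ⬝ᵥ (Jr *ᵥ ψ₂)] := by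
    ext i j
    rw [mul_Jr_mul_transpose_apply]
    fin_cases i <;> fin_cases j
    exacts [rfl, rfl, dotProduct_Jr_mulVec_comm ψ₁ ψ₂, rfl]
  have htrace : G.trace = w₁ * (ψ₁ ⬝ᵥ (Jr *ᵥ ψ₁)) + w₂ * (ψ₂ ⬝ᵥ (Jr *ᵥ ψ₂)) := by
    simp [G, D, hgram, trace_fin_two]
  have hdet : G.det =
      w₁ * w₂ * ((ψ₁ ⬝ᵥ (Jr *ᵥ ψ₁)) * (ψ₂ ⬝ᵥ (Jr *ᵥ ψ₂)) - (ψ₁ ⬝ᵥ (Jr *ᵥ ψ₂)) ^ 2) := by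
    rw [det_mul, hgram, det_fin_two_of, det_diagonal, Fin.prod_univ_two]
    simp [sq]
  obtain ⟨a, b, hsum, hprod⟩ := exists_add_eq_and_mul_eq_of_nonpos G.trace (hdet ▸ h)
  have hchar : (M * Jr * M * Jr).charpoly = X ^ 2 * ((X - C (a ^ 2)) * (X - C (b ^ 2))) := by
    rw [show M * Jr * M * Jr = Ψᵀ * (D * Ψ * Jr) * (Ψᵀ * (D * Ψ * Jr)) by
        simp only [M, Matrix.mul_assoc],
      charpoly_mul_self_mul_comm _ _ (by simp), ← charpoly_mul_self_fin_two G hsum hprod]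
    simp only [G, Matrix.mul_assoc, Fintype.card_fin]
  rw [hmix, concurrence_map_ofReal_of_charpoly M a b hchar,
    abs_abs_sub_abs_of_mul_nonpos (hprod.trans_le (hdet ▸ h)), hsum, htrace]

lemma concurrence_pureState (ψ : Fin 4 → ℝ) : concurrence (pureState ψ) = |ψ ⬝ᵥ (Jr *ᵥ ψ)| := by
  simpa using concurrence_smul_pureState_add_smul_pureState ψ ψ (w₁ := 1) (w₂ := 0) (by simp)

theorem rank_two_optimal_general
    (ψ₁ ψ₂ : Fin 4 → ℝ)
    (r₁₁ r₂₂ r₁₂ : ℝ)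
    (hr₁₁ : r₁₁ = ψ₁ ⬝ᵥ (Jr *ᵥ ψ₁)) (hr₂₂ : r₂₂ = ψ₂ ⬝ᵥ (Jr *ᵥ ψ₂))
    (hr₁₂ : r₁₂ = ψ₁ ⬝ᵥ (Jr *ᵥ ψ₂))
    (hpos : 0 < r₁₁ * r₂₂) (hχ : r₁₁ * r₂₂ - r₁₂ ^ 2 < 0) :
    ∀ p ∈ Set.Icc (0 : ℝ) 1,
      concurrence (p • pureState ψ₁ + (1 - p) • pureState ψ₂) =
          p * concurrence (pureState ψ₁) + (1 - p) * concurrence (pureState ψ₂) ∧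
      p * concurrence (pureState ψ₁) + (1 - p) * concurrence (pureState ψ₂) =
          p * |r₁₁| + (1 - p) * |r₂₂| := by
  rintro p ⟨hp, hp'⟩
  have hq : 0 ≤ 1 - p := sub_nonneg.2 hp'
  subst hr₁₁ hr₂₂ hr₁₂
  rw [concurrence_pureState, concurrence_pureState,
    concurrence_smul_pureState_add_smul_pureState ψ₁ ψ₂
      (mul_nonpos_of_nonneg_of_nonpos (mul_nonneg hp hq) hχ.le)]
  refine ⟨?_, rfl⟩
  rw [(abs_add_eq_add_abs_iff _ _).2, abs_mul, abs_mul, abs_of_nonneg hp, abs_of_nonneg hq]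
  rcases mul_pos_iff.1 hpos with ⟨h₁, h₂⟩ | ⟨h₁, h₂⟩
  · exact .inl ⟨mul_nonneg hp h₁.le, mul_nonneg hq h₂.le⟩
  · exact .inr ⟨mul_nonpos_of_nonneg_of_nonpos hp h₁.le, mul_nonpos_of_nonneg_of_nonpos hq h₂.le⟩

/-- Optimality conditions for pairs: if `r₁₁ r₂₂ > 0` and `r₁₁r₂₂ − r₁₂² < 0`,
then every mixture of the two real pure states is optimally entangled. -/
theorem rank_two_optimal
    (ψ₁ ψ₂ : Fin 4 → ℝ) (hind : LinearIndependent ℝ ![ψ₁, ψ₂])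
    (h₁ : ∑ i, ψ₁ i ^ 2 = 1) (h₂ : ∑ i, ψ₂ i ^ 2 = 1)
    (r₁₁ r₂₂ r₁₂ : ℝ)
    (hr₁₁ : r₁₁ = ψ₁ ⬝ᵥ (Jr *ᵥ ψ₁)) (hr₂₂ : r₂₂ = ψ₂ ⬝ᵥ (Jr *ᵥ ψ₂))
    (hr₁₂ : r₁₂ = ψ₁ ⬝ᵥ (Jr *ᵥ ψ₂))
    (hpos : 0 < r₁₁ * r₂₂) (hχ : r₁₁ * r₂₂ - r₁₂ ^ 2 < 0) :
    ∀ p ∈ Set.Icc (0 : ℝ) 1,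
      concurrence (p • pureState ψ₁ + (1 - p) • pureState ψ₂) =
          p * concurrence (pureState ψ₁) + (1 - p) * concurrence (pureState ψ₂) ∧
      p * concurrence (pureState ψ₁) + (1 - p) * concurrence (pureState ψ₂) =
          p * |r₁₁| + (1 - p) * |r₂₂| :=
  rank_two_optimal_general ψ₁ ψ₂ r₁₁ r₂₂ r₁₂ hr₁₁ hr₂₂ hr₁₂ hpos hχ
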